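/- arXiv:2406.01239 — 9 statements merged into one kernel-verified Lean document; each statement's English description precedes it below -/
import Mathlib

section
/- The 5×5 Horn matrix H, with H_{ii}=1 and off-diagonal entries H = [[1,-1,1,1,-1],[-1,1,-1,1,1],[1,-1,1,-1,1],[1,1,-1,1,-1],[-1,1,1,-1,1]], is copositive, i.e., uᵀ H u ≥ 0 for all u ∈ ℝ^5 with u ≥ 0. -/
open Matrix

/-- The 5×5 Horn matrix. -/
noncomputable def hornMatrix : Matrix (Fin 5) (Fin 5) ℝ :=
  !![1, -1, 1, 1, -1;
     -1, 1, -1, 1, 1;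
     1, -1, 1, -1, 1;
     1, 1, -1, 1, -1;
     -1, 1, 1, -1, 1]

theorem horn_copositive :
    ∀ u : Fin 5 → ℝ, (∀ i, 0 ≤ u i) → 0 ≤ u ⬝ᵥ hornMatrix *ᵥ u := by
  intro u hu
  have h0 := hu 0
  have h1 := hu 1
  have h2 := hu 2
  have h3 := hu 3
  have h4 := hu 4
  simp [hornMatrix, dotProduct, mulVec, Fin.sum_univ_five, Matrix.vecHead, Matrix.vecTail]
  rcases le_total (u 3) (u 4) with h | h
  · nlinarith [sq_nonneg (u 0 - u 1 + u 2 + u 3 - u 4), mul_nonneg h1 h3,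
      mul_nonneg h2 (sub_nonneg.2 h)]
  · nlinarith [sq_nonneg (u 0 - u 1 + u 2 - u 3 + u 4), mul_nonneg h1 h4,
      mul_nonneg h0 (sub_nonneg.2 h)]
end

section
/- The Horn matrix H is not SPN: there do not exist a positive semidefinite matrix P and an entrywise nonnegative matrix N with H = P + N. -/
open Matrix

private lemma horn_key {P N : Matrix (Fin 5) (Fin 5) ℝ} (hP : P.PosSemidef)
    (hN : ∀ i j, 0 ≤ N i j) (hH : hornMatrix = P + N) (v : Fin 5 → ℝ)
    (hv : ∀ i, 0 ≤ v i) (hq : v ⬝ᵥ hornMatrix *ᵥ v = 0) :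
    P *ᵥ v = 0 ∧ v ⬝ᵥ N *ᵥ v = 0 := by
  have hNq : 0 ≤ v ⬝ᵥ N *ᵥ v := by
    simp only [dotProduct, mulVec]
    apply Finset.sum_nonneg
    intro i _
    apply mul_nonneg (hv i)
    apply Finset.sum_nonneg
    intro j _
    exact mul_nonneg (hN i j) (hv j)
  have hPq : 0 ≤ v ⬝ᵥ P *ᵥ v := by simpa using hP.dotProduct_mulVec_nonneg v
  have hsplit : v ⬝ᵥ P *ᵥ v + v ⬝ᵥ N *ᵥ v = 0 := by
    rw [← dotProduct_add, ← add_mulVec, ← hH, hq]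
  have hP0 : v ⬝ᵥ P *ᵥ v = 0 := by linarith
  refine ⟨(hP.dotProduct_mulVec_zero_iff v).mp ?_, by linarith⟩
  simpa using hP0

theorem horn_not_spn :
    ¬ ∃ P N : Matrix (Fin 5) (Fin 5) ℝ,
      P.PosSemidef ∧ N.IsSymm ∧ (∀ i j, 0 ≤ N i j) ∧ hornMatrix = P + N := by
  rintro ⟨P, N, hP, -, hN, hH⟩
  have k01 := horn_key hP hN hH ![1,1,0,0,0] (fun i => by fin_cases i <;> norm_num)
    (by norm_num [hornMatrix, dotProduct, mulVec, Fin.sum_univ_five, Matrix.cons_val_two, Matrix.cons_val_three, Matrix.cons_val_four, Matrix.head_cons, Matrix.tail_cons])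
  have k12 := horn_key hP hN hH ![0,1,1,0,0] (fun i => by fin_cases i <;> norm_num)
    (by norm_num [hornMatrix, dotProduct, mulVec, Fin.sum_univ_five, Matrix.cons_val_two, Matrix.cons_val_three, Matrix.cons_val_four, Matrix.head_cons, Matrix.tail_cons])
  have k23 := horn_key hP hN hH ![0,0,1,1,0] (fun i => by fin_cases i <;> norm_num)
    (by norm_num [hornMatrix, dotProduct, mulVec, Fin.sum_univ_five, Matrix.cons_val_two, Matrix.cons_val_three, Matrix.cons_val_four, Matrix.head_cons, Matrix.tail_cons])
  have k34 := horn_key hP hN hH ![0,0,0,1,1] (fun i => by fin_cases i <;> norm_num)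
    (by norm_num [hornMatrix, dotProduct, mulVec, Fin.sum_univ_five, Matrix.cons_val_two, Matrix.cons_val_three, Matrix.cons_val_four, Matrix.head_cons, Matrix.tail_cons])
  have k40 := horn_key hP hN hH ![1,0,0,0,1] (fun i => by fin_cases i <;> norm_num)
    (by norm_num [hornMatrix, dotProduct, mulVec, Fin.sum_univ_five, Matrix.cons_val_two, Matrix.cons_val_three, Matrix.cons_val_four, Matrix.head_cons, Matrix.tail_cons])
  -- entries of P in row 0
  have e01 : P 0 0 + P 0 1 = 0 := by
    have := congrFun k01.1 0
    simpa [mulVec, dotProduct, Fin.sum_univ_five] using this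
  have e12 : P 0 1 + P 0 2 = 0 := by
    have := congrFun k12.1 0
    simpa [mulVec, dotProduct, Fin.sum_univ_five] using this
  have e23 : P 0 2 + P 0 3 = 0 := by
    have := congrFun k23.1 0
    simpa [mulVec, dotProduct, Fin.sum_univ_five] using this
  have e34 : P 0 3 + P 0 4 = 0 := by
    have := congrFun k34.1 0
    simpa [mulVec, dotProduct, Fin.sum_univ_five] using this
  have e40 : P 0 0 + P 0 4 = 0 := by
    have := congrFun k40.1 0
    simpa [mulVec, dotProduct, Fin.sum_univ_five] using this
  -- N 0 0 = 0
  have hNsum : N 0 0 + N 0 1 + N 1 0 + N 1 1 = 0 := by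
    have := k01.2
    simp [mulVec, dotProduct, Fin.sum_univ_five] at this
    linarith
  have hN00 : N 0 0 = 0 := by
    have h1 := hN 0 1; have h2 := hN 1 0; have h3 := hN 1 1; have h4 := hN 0 0
    linarith
  have hHe : hornMatrix 0 0 = P 0 0 + N 0 0 := by rw [hH]; rfl
  have : (1 : ℝ) = P 0 0 + N 0 0 := by
    rw [← hHe]; simp [hornMatrix]
  linarith
end

section
/- Let F be the 5×5 symmetric circulant matrix (1/78.2)·circ(7, 4.32, 0, 0, 4.32). Then F is doubly nonnegative (positive semidefinite and entrywise nonnegative) and ⟨H, F⟩ < 0, where H is the Horn matrix; hence F witnesses that H is not SPN. -/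
open Matrix

/-- The separating matrix F = (1/78.2) · circ(7, 4.32, 0, 0, 4.32). -/
noncomputable def sepF : Matrix (Fin 5) (Fin 5) ℝ :=
  (78.2 : ℝ)⁻¹ •
    !![7, 4.32, 0, 0, 4.32;
       4.32, 7, 4.32, 0, 0;
       0, 4.32, 7, 4.32, 0;
       0, 0, 4.32, 7, 4.32;
       4.32, 0, 0, 4.32, 7]

private lemma trace_nonneg_of_psd {n : ℕ} {M : Matrix (Fin n) (Fin n) ℝ}
    (hM : M.PosSemidef) : 0 ≤ M.trace := by
  apply Finset.sum_nonneg
  intro i _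
  have h := hM.dotProduct_mulVec_nonneg (Pi.single i 1)
  simpa [dotProduct, mulVec, Pi.single_apply, mul_ite, ite_mul,
    Finset.sum_ite_eq, Finset.sum_ite_eq'] using h

theorem sepF_separates_horn :
    sepF.PosSemidef ∧ (∀ i j, 0 ≤ sepF i j) ∧ (hornMatrixᵀ * sepF).trace < 0 ∧
      ¬ ∃ P N : Matrix (Fin 5) (Fin 5) ℝ,
        P.PosSemidef ∧ N.IsSymm ∧ (∀ i j, 0 ≤ N i j) ∧ hornMatrix = P + N := by
  have hpsd : sepF.PosSemidef := by
    refine posSemidef_iff_dotProduct_mulVec.mpr ⟨?_, ?_⟩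
    · ext i j
      fin_cases i <;> fin_cases j <;>
        simp [sepF, Matrix.conjTranspose_apply, Matrix.vecHead, Matrix.vecTail] <;> norm_num
    · intro x
      have hx : (star x : Fin 5 → ℝ) = x := by simp
      rw [hx]
      simp only [sepF, dotProduct, mulVec, Fin.sum_univ_five, Matrix.smul_apply,
        smul_eq_mul, Matrix.cons_val_zero, Matrix.cons_val_one,
        Matrix.cons_val_succ, Matrix.head_cons, Matrix.of_apply,
        Matrix.cons_val', Matrix.empty_val', Matrix.cons_val_fin_one,
        show (2:Fin 5) = Fin.succ 1 from rfl, show (3:Fin 5) = Fin.succ 2 from rfl,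
        show (4:Fin 5) = Fin.succ 3 from rfl, show (1:Fin 5) = Fin.succ 0 from rfl,
        show (2:Fin 4) = Fin.succ 1 from rfl, show (3:Fin 4) = Fin.succ 2 from rfl,
        show (1:Fin 4) = Fin.succ 0 from rfl,
        show (2:Fin 3) = Fin.succ 1 from rfl, show (1:Fin 3) = Fin.succ 0 from rfl,
        show (1:Fin 2) = Fin.succ 0 from rfl]
      have e1 : x (Fin.succ 0) = x 1 := rfl
      have e2 : x ((Fin.succ 0).succ) = x 2 := rfl
      have e3 : x ((Fin.succ 0).succ.succ) = x 3 := rfl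
      have e4 : x ((Fin.succ 0).succ.succ.succ) = x 4 := rfl
      rw [e1, e2, e3, e4]
      nlinarith [sq_nonneg (x 0 + (108/175) * x 1 + (108/175) * x 4),
        sq_nonneg (x 1 + (18900/18961) * x 2 - (11664/18961) * x 4),
        sq_nonneg (x 2 + (2047788/1276975) * x 3 + (1259712/1276975) * x 4),
        sq_nonneg (x 3 + (30564/37861) * x 4),
        sq_nonneg (x 4)]
  have hnn : ∀ i j, 0 ≤ sepF i j := by
    intro i j
    fin_cases i <;> fin_cases j <;> simp [sepF, Matrix.vecHead, Matrix.vecTail] <;> norm_num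
  have htr : (hornMatrixᵀ * sepF).trace < 0 := by
    simp only [Matrix.trace, Matrix.diag, Matrix.mul_apply, Fin.sum_univ_five,
      Matrix.transpose_apply, hornMatrix, sepF, Matrix.smul_apply, smul_eq_mul,
      Matrix.cons_val_zero, Matrix.cons_val_one,
      Matrix.cons_val_succ, Matrix.head_cons, Matrix.of_apply,
      Matrix.cons_val', Matrix.empty_val', Matrix.cons_val_fin_one,
      show (2:Fin 5) = Fin.succ 1 from rfl, show (3:Fin 5) = Fin.succ 2 from rfl,
      show (4:Fin 5) = Fin.succ 3 from rfl, show (1:Fin 5) = Fin.succ 0 from rfl,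
      show (2:Fin 4) = Fin.succ 1 from rfl, show (3:Fin 4) = Fin.succ 2 from rfl,
      show (1:Fin 4) = Fin.succ 0 from rfl,
      show (2:Fin 3) = Fin.succ 1 from rfl, show (1:Fin 3) = Fin.succ 0 from rfl,
      show (1:Fin 2) = Fin.succ 0 from rfl]
    norm_num
  refine ⟨hpsd, hnn, htr, ?_⟩
  rintro ⟨P, N, hP, hNs, hN, hH⟩
  have hPt : Pᵀ = P := by
    ext i j
    have h := congrFun (congrFun hP.1 i) j
    simpa [Matrix.conjTranspose_apply] using h
  -- trace (Pᵀ * sepF) ≥ 0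
  obtain ⟨B, hB⟩ : ∃ B : Matrix (Fin 5) (Fin 5) ℝ, sepF = Bᴴ * B := by
    open scoped MatrixOrder Matrix.Norms.L2Operator in
    exact CStarAlgebra.nonneg_iff_eq_star_mul_self.mp hpsd.nonneg
  have hPF : 0 ≤ (Pᵀ * sepF).trace := by
    rw [hPt, hB, ← Matrix.mul_assoc, Matrix.trace_mul_cycle]
    exact trace_nonneg_of_psd (hP.mul_mul_conjTranspose_same B)
  have hNF : 0 ≤ (Nᵀ * sepF).trace := by
    apply Finset.sum_nonneg
    intro i _
    simp only [Matrix.diag, Matrix.mul_apply, Matrix.transpose_apply]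
    exact Finset.sum_nonneg fun j _ => mul_nonneg (hN j i) (hnn j i)
  have : (hornMatrixᵀ * sepF).trace = (Pᵀ * sepF).trace + (Nᵀ * sepF).trace := by
    rw [hH, Matrix.transpose_add, Matrix.add_mul, Matrix.trace_add]
  linarith
end

section
/- Let x be in the standard simplex F_n = {x ∈ ℝ^n_+ : eᵀx = 1}, let R be a symmetric positive definite n×n matrix, N a symmetric entrywise nonnegative matrix with xᵀNx = 0, λ ∈ ℝ, and Q = (I − e xᵀ) R (I − x eᵀ) + N + λ e eᵀ. Then for every y ∈ F_n, yᵀ Q y ≥ λ = xᵀ Q x, with equality if and only if y = x. In particular, x is the unique global minimizer of yᵀQy over F_n. -/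
open Matrix

theorem unique_global_minimizer_exact {n : ℕ}
    (x : Fin n → ℝ) (hx0 : ∀ i, 0 ≤ x i) (hx1 : ∑ i, x i = 1)
    (R : Matrix (Fin n) (Fin n) ℝ) (hRsymm : R.IsSymm) (hRpd : R.PosDef)
    (N : Matrix (Fin n) (Fin n) ℝ) (hNsymm : N.IsSymm) (hN0 : ∀ i j, 0 ≤ N i j)
    (hxN : x ⬝ᵥ N *ᵥ x = 0) (lam : ℝ)
    (Q : Matrix (Fin n) (Fin n) ℝ)
    (hQ : Q = (1 - vecMulVec (fun _ => (1 : ℝ)) x) * R * (1 - vecMulVec x (fun _ => (1 : ℝ)))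
      + N + lam • vecMulVec (fun _ => (1 : ℝ)) (fun _ => (1 : ℝ))) :
    x ⬝ᵥ Q *ᵥ x = lam ∧
      ∀ y : Fin n → ℝ, (∀ i, 0 ≤ y i) → ∑ i, y i = 1 →
        lam ≤ y ⬝ᵥ Q *ᵥ y ∧ (y ⬝ᵥ Q *ᵥ y = lam ↔ y = x) := by
  subst hQ
  have hmv : ∀ (a b v : Fin n → ℝ), vecMulVec a b *ᵥ v = (b ⬝ᵥ v) • a := by
    intro a b v; ext i
    simp [vecMulVec, mulVec, dotProduct, Finset.mul_sum, mul_assoc, mul_comm, mul_left_comm]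
  have key : ∀ y : Fin n → ℝ, ∑ i, y i = 1 →
      y ⬝ᵥ ((1 - vecMulVec (fun _ => (1 : ℝ)) x) * R * (1 - vecMulVec x (fun _ => (1 : ℝ)))
        + N + lam • vecMulVec (fun _ => (1 : ℝ)) (fun _ => (1 : ℝ))) *ᵥ y
      = (y - x) ⬝ᵥ R *ᵥ (y - x) + y ⬝ᵥ N *ᵥ y + lam := by
    intro y hy
    have hey : (fun _ => (1 : ℝ)) ⬝ᵥ y = 1 := by simp [dotProduct, hy]
    have hye : y ⬝ᵥ (fun _ => (1 : ℝ)) = 1 := by simp [dotProduct, hy]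
    have h1 : (1 - vecMulVec x (fun _ => (1 : ℝ))) *ᵥ y = y - x := by
      rw [Matrix.sub_mulVec, Matrix.one_mulVec, hmv, hey, one_smul]
    have h2 : ∀ w : Fin n → ℝ, y ⬝ᵥ ((1 - vecMulVec (fun _ => (1 : ℝ)) x) *ᵥ w)
        = (y - x) ⬝ᵥ w := by
      intro w
      rw [Matrix.sub_mulVec, Matrix.one_mulVec, hmv, dotProduct_sub, dotProduct_smul,
        sub_dotProduct]
      have : y ⬝ᵥ (fun _ => (1 : ℝ)) * (x ⬝ᵥ w) = x ⬝ᵥ w := by rw [hye, one_mul]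
      simp only [smul_eq_mul]
      rw [mul_comm, this]
    have h3 : (lam • vecMulVec (fun _ => (1 : ℝ)) (fun _ => (1 : ℝ))
          : Matrix (Fin n) (Fin n) ℝ) *ᵥ y = lam • ((fun _ => (1 : ℝ)) : Fin n → ℝ) := by
      rw [Matrix.smul_mulVec, hmv, hey, one_smul]
    rw [Matrix.add_mulVec, Matrix.add_mulVec, dotProduct_add, dotProduct_add, h3,
      dotProduct_smul, hye, ← Matrix.mulVec_mulVec, ← Matrix.mulVec_mulVec, h1, h2]
    simp
  constructor
  · rw [key x hx1]
    simp [hxN]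
  · intro y hy0 hy1
    rw [key y hy1]
    have hNy : 0 ≤ y ⬝ᵥ N *ᵥ y := by
      unfold dotProduct mulVec dotProduct
      refine Finset.sum_nonneg fun i _ => ?_
      refine mul_nonneg (hy0 i) (Finset.sum_nonneg fun j _ => mul_nonneg (hN0 i j) (hy0 j))
    have hR : 0 ≤ (y - x) ⬝ᵥ R *ᵥ (y - x) := by
      rcases eq_or_ne (y - x) 0 with h | h
      · simp [h]
      · have := hRpd.dotProduct_mulVec_pos h
        simpa using this.le
    constructor
    · linarith
    · constructor
      · intro heq
        by_contra hne
        have hyx : y - x ≠ 0 := sub_ne_zero.mpr hne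
        have hpos := hRpd.dotProduct_mulVec_pos hyx
        simp only [star_trivial] at hpos
        linarith
      · intro heq
        subst heq
        simp [hxN]
end

section
/- Let x ∈ F_n with support A = {j : x_j > 0} and complement B. Let R be symmetric with R_{AA} positive semidefinite, R_{BB} copositive, R_{AB} = 0, and let N be symmetric with N_{AA} = 0 and all other blocks entrywise nonnegative. Then the matrix M = (I − e xᵀ) R (I − x eᵀ) + N is copositive and satisfies xᵀ M x = 0. Consequently x is a global minimizer of yᵀMy over the standard simplex F_n. -/
open Matrix

/-- with support A = {j : x j > 0} and zero set B = {j : x j = 0},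
`R_{AA}` PSD is stated as nonnegativity of the quadratic form on vectors supported on A,
`R_{BB}` copositive as nonnegativity on nonnegative vectors supported on B, and
`R_{AB} = 0`, `N_{AA} = 0` entrywise. -/
theorem copositive_construction_global_min {n : ℕ}
    (x : Fin n → ℝ) (hx0 : ∀ i, 0 ≤ x i) (hx1 : ∑ i, x i = 1)
    (R : Matrix (Fin n) (Fin n) ℝ) (hRsymm : R.IsSymm)
    (hRAA : ∀ z : Fin n → ℝ, (∀ j, x j = 0 → z j = 0) → 0 ≤ z ⬝ᵥ R *ᵥ z)
    (hRBB : ∀ z : Fin n → ℝ, (∀ j, 0 ≤ z j) → (∀ j, 0 < x j → z j = 0) →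
      0 ≤ z ⬝ᵥ R *ᵥ z)
    (hRAB : ∀ i j, 0 < x i → x j = 0 → R i j = 0)
    (N : Matrix (Fin n) (Fin n) ℝ) (hNsymm : N.IsSymm)
    (hNAA : ∀ i j, 0 < x i → 0 < x j → N i j = 0)
    (hN0 : ∀ i j, 0 ≤ N i j)
    (M : Matrix (Fin n) (Fin n) ℝ)
    (hM : M = (1 - vecMulVec (fun _ => (1 : ℝ)) x) * R * (1 - vecMulVec x (fun _ => (1 : ℝ)))
      + N) :
    (∀ u : Fin n → ℝ, (∀ i, 0 ≤ u i) → 0 ≤ u ⬝ᵥ M *ᵥ u) ∧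
      x ⬝ᵥ M *ᵥ x = 0 ∧
      ∀ y : Fin n → ℝ, (∀ i, 0 ≤ y i) → ∑ i, y i = 1 →
        x ⬝ᵥ M *ᵥ x ≤ y ⬝ᵥ M *ᵥ y := by
  have hxB : ∀ j, ¬ 0 < x j → x j = 0 := fun j h => le_antisymm (not_lt.1 h) (hx0 j)
  -- key identity
  have key : ∀ u : Fin n → ℝ,
      u ⬝ᵥ M *ᵥ u
        = (u - (∑ i, u i) • x) ⬝ᵥ R *ᵥ (u - (∑ i, u i) • x) + u ⬝ᵥ N *ᵥ u := by
    intro u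
    have hB : (1 - vecMulVec x (fun _ => (1:ℝ))) *ᵥ u = u - (∑ i, u i) • x := by
      ext j
      simp [sub_mulVec, mulVec, vecMulVec_apply, dotProduct, one_apply, mul_sub,
        Finset.sum_sub_distrib, Finset.sum_ite_eq, Finset.mul_sum, mul_comm]
    have hA : u ᵥ* (1 - vecMulVec (fun _ => (1:ℝ)) x) = u - (∑ i, u i) • x := by
      ext j
      simp [sub_vecMul, vecMul, vecMulVec_apply, dotProduct, one_apply, mul_sub,
        Finset.sum_sub_distrib, Finset.sum_ite_eq', Finset.mul_sum, mul_comm]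
    rw [hM]
    rw [add_mulVec, dotProduct_add, mul_assoc, ← mulVec_mulVec, ← mulVec_mulVec, hB,
      dotProduct_mulVec, hA]
  have hcop : ∀ u : Fin n → ℝ, (∀ i, 0 ≤ u i) → 0 ≤ u ⬝ᵥ M *ᵥ u := by
    intro u hu
    rw [key u]
    set s := ∑ i, u i with hs
    set v := u - s • x with hv
    have hvB : ∀ j, ¬ 0 < x j → v j = u j := by
      intro j hj
      simp [hv, hxB j hj]
    set vA : Fin n → ℝ := fun j => if 0 < x j then v j else 0 with hvA
    set vB : Fin n → ℝ := fun j => if 0 < x j then 0 else v j with hvBdef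
    have hsplit : v = vA + vB := by
      ext j; by_cases h : 0 < x j <;> simp [hvA, hvBdef, h]
    have cross1 : vA ⬝ᵥ R *ᵥ vB = 0 := by
      simp only [dotProduct, mulVec]
      apply Finset.sum_eq_zero; intro i _
      rw [Finset.mul_sum]
      apply Finset.sum_eq_zero; intro j _
      by_cases hi : 0 < x i
      · by_cases hj : 0 < x j
        · simp [hvBdef, hj]
        · rw [hRAB i j hi (hxB j hj)]; ring
      · simp [hvA, hi]
    have cross2 : vB ⬝ᵥ R *ᵥ vA = 0 := by
      simp only [dotProduct, mulVec]
      apply Finset.sum_eq_zero; intro i _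
      rw [Finset.mul_sum]
      apply Finset.sum_eq_zero; intro j _
      by_cases hj : 0 < x j
      · by_cases hi : 0 < x i
        · simp [hvBdef, hi]
        · rw [← hRsymm.apply i j, hRAB j i hj (hxB i hi)]
          ring
      · simp [hvA, hj]
    have hexp : v ⬝ᵥ R *ᵥ v = vA ⬝ᵥ R *ᵥ vA + vB ⬝ᵥ R *ᵥ vB := by
      rw [hsplit]
      rw [mulVec_add, dotProduct_add, add_dotProduct, add_dotProduct, cross1, cross2]
      ring
    have h1 : 0 ≤ vA ⬝ᵥ R *ᵥ vA := by
      apply hRAA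
      intro j hj
      simp [hvA, hj]
    have h2 : 0 ≤ vB ⬝ᵥ R *ᵥ vB := by
      apply hRBB
      · intro j
        by_cases h : 0 < x j
        · simp [hvBdef, h]
        · simp only [hvBdef, if_neg h]
          rw [hvB j h]; exact hu j
      · intro j hj; simp [hvBdef, hj]
    have h3 : 0 ≤ u ⬝ᵥ N *ᵥ u := by
      simp only [dotProduct, mulVec]
      apply Finset.sum_nonneg; intro i _
      apply mul_nonneg (hu i)
      apply Finset.sum_nonneg; intro j _
      exact mul_nonneg (hN0 i j) (hu j)
    rw [hexp]
    linarith
  have hx2 : x ⬝ᵥ M *ᵥ x = 0 := by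
    rw [key x, hx1, one_smul, sub_self]
    simp only [zero_dotProduct, zero_add]
    simp only [dotProduct, mulVec]
    apply Finset.sum_eq_zero; intro i _
    rw [Finset.mul_sum]
    apply Finset.sum_eq_zero; intro j _
    by_cases hi : 0 < x i
    · by_cases hj : 0 < x j
      · rw [hNAA i j hi hj]; ring
      · rw [hxB j hj]; ring
    · rw [hxB i hi]; ring
  exact ⟨hcop, hx2, fun y hy _ => hx2 ▸ hcop y hy⟩
end

section
/- Let R_{BB} ∈ S^m be copositive but not SPN, and let T ∈ S^m be doubly nonnegative with ⟨R_{BB}, T⟩ = −δ < 0 and μ = e_Bᵀ T e_B > 0. Extend R to a block-diagonal structure with R_{AA} positive semidefinite, R_{AB} = 0, and form M = (I − e xᵀ) R (I − x eᵀ) for x ∈ F_n supported on A. If the operator norm of R_{AA} is strictly less than δ/μ, then the doubly nonnegative matrix U with U_{BB} = T and all other blocks zero satisfies ⟨M, U⟩ < 0; hence M is not SPN. -/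
open Matrix

lemma psd_trace_nonneg {ι : Type*} [Fintype ι] {S : Matrix ι ι ℝ}
    (hS : S.PosSemidef) : 0 ≤ S.trace := by
  classical
  refine Finset.sum_nonneg fun i _ => ?_
  simpa using hS.dotProduct_mulVec_nonneg (Pi.single i 1)

lemma psd_mul_trace_nonneg {ι : Type*} [Fintype ι] [DecidableEq ι]
    {P U : Matrix ι ι ℝ} (hP : P.PosSemidef) (hU : U.PosSemidef) :
    0 ≤ (P * U).trace := by
  obtain ⟨B, rfl⟩ : ∃ B : Matrix ι ι ℝ, U = Bᴴ * B := by
    open scoped MatrixOrder in exact CStarAlgebra.nonneg_iff_eq_star_mul_self.mp hU.nonneg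
  have h : (P * (Bᴴ * B)).trace = (B * P * Bᴴ).trace := by
    rw [trace_mul_comm, Matrix.mul_assoc, trace_mul_comm]
  rw [h]
  exact psd_trace_nonneg (hP.mul_mul_conjTranspose_same B)

/-- the index set is split as `Fin p ⊕ Fin m` (the A-block and the
B-block).  `R = fromBlocks R_AA 0 0 R_BB` with `R_AA` PSD and `R_BB` copositive but
not SPN; `T` is doubly nonnegative with `⟨R_BB, T⟩ = -δ < 0` and `μ = eᵀTe > 0`;
`x` is in the standard simplex and supported on the A-block; the operator-norm bound
`‖R_AA‖ < δ/μ` is expressed via the quadratic form over the unit ball (valid since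
`R_AA` is symmetric PSD).  Then `U = fromBlocks 0 0 0 T` is doubly nonnegative and
`⟨M, U⟩ < 0`, hence `M` is not SPN. -/
theorem exceptional_construction_not_spn {p m : ℕ}
    (RAA : Matrix (Fin p) (Fin p) ℝ) (RBB : Matrix (Fin m) (Fin m) ℝ)
    (T : Matrix (Fin m) (Fin m) ℝ) (δ μ : ℝ)
    (xA : Fin p → ℝ)
    (hRAAsymm : RAA.IsSymm) (hRAApsd : RAA.PosSemidef)
    (hRBBsymm : RBB.IsSymm)
    (hRBBcop : ∀ z : Fin m → ℝ, (∀ i, 0 ≤ z i) → 0 ≤ z ⬝ᵥ RBB *ᵥ z)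
    (hRBBnotSpn : ¬ ∃ P N : Matrix (Fin m) (Fin m) ℝ,
      P.PosSemidef ∧ N.IsSymm ∧ (∀ i j, 0 ≤ N i j) ∧ RBB = P + N)
    (hTpsd : T.PosSemidef) (hT0 : ∀ i j, 0 ≤ T i j)
    (hδ : (RBBᵀ * T).trace = -δ) (hδpos : 0 < δ)
    (hμ : μ = ∑ i, ∑ j, T i j) (hμpos : 0 < μ)
    (hxA0 : ∀ i, 0 ≤ xA i) (hxA1 : ∑ i, xA i = 1)
    (hnorm : ∀ z : Fin p → ℝ, z ⬝ᵥ z ≤ 1 → z ⬝ᵥ RAA *ᵥ z < δ / μ)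
    (R : Matrix (Fin p ⊕ Fin m) (Fin p ⊕ Fin m) ℝ)
    (hR : R = Matrix.fromBlocks RAA 0 0 RBB)
    (x : Fin p ⊕ Fin m → ℝ) (hx : x = Sum.elim xA 0)
    (M U : Matrix (Fin p ⊕ Fin m) (Fin p ⊕ Fin m) ℝ)
    (hM : M = (1 - vecMulVec (fun _ => (1 : ℝ)) x) * R
      * (1 - vecMulVec x (fun _ => (1 : ℝ))))
    (hU : U = Matrix.fromBlocks 0 0 0 T) :
    (Mᵀ * U).trace < 0 ∧
      ¬ ∃ P N : Matrix (Fin p ⊕ Fin m) (Fin p ⊕ Fin m) ℝ,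
        P.PosSemidef ∧ N.IsSymm ∧ (∀ i j, 0 ≤ N i j) ∧ M = P + N := by
  classical
  set c : ℝ := xA ⬝ᵥ RAA *ᵥ xA with hc
  have hvmul : x ᵥ* R = Sum.elim (xA ᵥ* RAA) 0 := by
    subst hx hR
    rw [vecMul_fromBlocks]
    simp
  set L : Matrix (Fin p ⊕ Fin m) (Fin p ⊕ Fin m) ℝ
    := (1 - vecMulVec (fun _ => (1 : ℝ)) x) * R with hLdef
  have hrow : ∀ i l, L i l = R i l - (x ᵥ* R) l := by
    intro i l
    rw [hLdef, Matrix.sub_mul, Matrix.one_mul, Matrix.sub_apply]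
    congr 1
    simp [Matrix.mul_apply, vecMulVec_apply, vecMul, dotProduct]
  have hMBB : ∀ i j, M (Sum.inr i) (Sum.inr j) = c + RBB i j := by
    intro i j
    have h1 : M (Sum.inr i) (Sum.inr j)
        = L (Sum.inr i) (Sum.inr j) - ∑ l, L (Sum.inr i) l * x l := by
      rw [hM, Matrix.mul_sub, Matrix.mul_one, Matrix.sub_apply]
      congr 1
      simp [Matrix.mul_apply, vecMulVec_apply]
    rw [h1]
    simp only [hrow, hvmul]
    rw [hx, hR]
    simp only [Fintype.sum_sum_type]
    simp [hc, dotProduct, sub_mul, Finset.sum_sub_distrib]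
    rw [add_comm]
    congr 1
    exact (Matrix.dotProduct_mulVec xA RAA xA).symm
  -- the trace
  have hswap : ∑ i, ∑ j, T j i = μ := by rw [hμ]; exact Finset.sum_comm
  have h2 : (RBBᵀ * T).trace = ∑ i : Fin m, ∑ j : Fin m, RBB j i * T j i := by
    simp [Matrix.trace, Matrix.mul_apply, Matrix.diag]
  have h3 : ∑ i : Fin m, ∑ j : Fin m, RBB j i * T j i = -δ := h2.symm.trans hδ
  have hcT : ∑ i : Fin m, ∑ j : Fin m, c * T j i = c * μ := by
    rw [← hswap, Finset.mul_sum]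
    exact Finset.sum_congr rfl fun i _ => (Finset.mul_sum _ _ _).symm
  have htr : (Mᵀ * U).trace = c * μ - δ := by
    have h1 : (Mᵀ * U).trace
        = ∑ i : Fin m, ∑ j : Fin m, M (Sum.inr j) (Sum.inr i) * T j i := by
      rw [hU]
      simp [Matrix.trace, Matrix.mul_apply, Matrix.diag, Fintype.sum_sum_type]
    rw [h1]
    simp only [hMBB, add_mul, Finset.sum_add_distrib]
    rw [h3, hcT]
    ring
  have hclt : c < δ / μ := by
    apply hnorm
    calc xA ⬝ᵥ xA = ∑ i, xA i * xA i := rfl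
      _ ≤ ∑ i, xA i * (∑ j, xA j) := by
          refine Finset.sum_le_sum fun i _ => mul_le_mul_of_nonneg_left ?_ (hxA0 i)
          exact Finset.single_le_sum (fun j _ => hxA0 j) (Finset.mem_univ i)
      _ = 1 := by rw [hxA1]; simpa using hxA1
  have hlt : (Mᵀ * U).trace < 0 := by
    rw [htr]
    have hcm : c * μ < δ := by
      have := (lt_div_iff₀ hμpos).mp hclt
      linarith
    linarith
  refine ⟨hlt, ?_⟩
  rintro ⟨P, N, hP, hNs, hN0, hMPN⟩
  have hUpsd : U.PosSemidef := by
    refine Matrix.PosSemidef.of_dotProduct_mulVec_nonneg ?_ ?_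
    · rw [hU]
      have hTs : ∀ i j, T j i = T i j := fun i j => by
        have := congrFun (congrFun hTpsd.1 i) j
        simpa [Matrix.conjTranspose_apply] using this
      ext (i | i) (j | j) <;>
        simp [Matrix.conjTranspose_apply, Matrix.fromBlocks, hTs]
    · intro v
      simpa [hU, Matrix.mulVec, dotProduct, Fintype.sum_sum_type,
        Function.comp] using hTpsd.dotProduct_mulVec_nonneg (v ∘ Sum.inr)
  have hU0 : ∀ i j, 0 ≤ U i j := by
    intro i j
    rw [hU]
    rcases i with i | i <;> rcases j with j | j <;> simp [Matrix.fromBlocks, hT0]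
  have hPt : Pᵀ = P := hP.1
  have hsplit : (Mᵀ * U).trace = (Pᵀ * U).trace + (Nᵀ * U).trace := by
    rw [hMPN, Matrix.transpose_add, Matrix.add_mul, trace_add]
  have hPU : 0 ≤ (Pᵀ * U).trace := by
    rw [hPt]
    exact psd_mul_trace_nonneg hP hUpsd
  have hNU : 0 ≤ (Nᵀ * U).trace := by
    have h : (Nᵀ * U).trace = ∑ i, ∑ j, N j i * U j i := by
      simp [Matrix.trace, Matrix.mul_apply, Matrix.diag]
    rw [h]
    exact Finset.sum_nonneg fun i _ => Finset.sum_nonneg fun j _ =>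
      mul_nonneg (hN0 j i) (hU0 j i)
  linarith
end

section
/- Suppose W ∈ S^{2n+1} is a symmetric positive semidefinite matrix of the block form [[1, xᵀ, uᵀ],[x, W^{xx}, W^{xu}],[u, (W^{xu})ᵀ, W^{uu}]] satisfying diag(W^{uu}) = u, W^{xx} ≥ 0, x eᵀ − W^{xu} ≥ 0, −W^{xx} + W^{xu} ≥ 0, W^{xx} − W^{xu} − (W^{xu})ᵀ + W^{uu} ≥ 0, e eᵀ − e uᵀ − u eᵀ + W^{uu} ≥ 0, and −e xᵀ + (W^{xu})ᵀ + e uᵀ − W^{uu} ≥ 0. Then W is entrywise nonnegative (hence doubly nonnegative), and moreover u ≤ e and x ≤ u componentwise. -/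
open Matrix

theorem blockW_dnn_and_bounds {n : ℕ}
    (x u : Fin n → ℝ) (Wxx Wxu Wuu : Matrix (Fin n) (Fin n) ℝ)
    (W : Matrix (Unit ⊕ (Fin n ⊕ Fin n)) (Unit ⊕ (Fin n ⊕ Fin n)) ℝ)
    (hW : W = Matrix.fromBlocks
      (Matrix.of fun (_ _ : Unit) => (1 : ℝ))
      (Matrix.of fun (_ : Unit) j => Sum.elim x u j)
      (Matrix.of fun i (_ : Unit) => Sum.elim x u i)
      (Matrix.fromBlocks Wxx Wxu Wxuᵀ Wuu))
    (hWpsd : W.PosSemidef)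
    (hdiagUU : ∀ i, Wuu i i = u i)
    (hWxx : ∀ i j, 0 ≤ Wxx i j)
    (h1 : ∀ i j, 0 ≤ x i - Wxu i j)
    (h2 : ∀ i j, 0 ≤ -Wxx i j + Wxu i j)
    (h3 : ∀ i j, 0 ≤ Wxx i j - Wxu i j - Wxu j i + Wuu i j)
    (h4 : ∀ i j, 0 ≤ 1 - u j - u i + Wuu i j)
    (h5 : ∀ i j, 0 ≤ -x j + Wxu j i + u j - Wuu i j) :
    (∀ i j, 0 ≤ W i j) ∧ (∀ i, u i ≤ 1) ∧ (∀ i, x i ≤ u i) := by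
  have hu0 : ∀ i, 0 ≤ u i := by
    intro i
    have h := hWpsd.dotProduct_mulVec_nonneg (Pi.single (Sum.inr (Sum.inr i)) 1)
    simpa [dotProduct_single, Matrix.mulVec_single, hW,
      Matrix.fromBlocks, hdiagUU i] using h
  have hxu0 : ∀ i j, 0 ≤ Wxu i j := fun i j => by
    have := h2 i j; have := hWxx i j; linarith
  have hx0 : ∀ j, 0 ≤ x j := fun j => by
    have := h1 j j; have := hxu0 j j; linarith
  have huu0 : ∀ i j, 0 ≤ Wuu i j := fun i j => by
    have := h3 i j; have := h2 i j; have := hxu0 j i; linarith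
  refine ⟨?_, ?_, ?_⟩
  · subst hW
    rintro (⟨⟩|i|i) (⟨⟩|j|j) <;>
      simp [Matrix.fromBlocks, hx0, hu0, hWxx, hxu0, huu0]
  · intro i
    have := h4 i i; have := hdiagUU i; linarith
  · intro i
    have := h5 i i; have := h3 i i; have := h2 i i; have := hdiagUU i; linarith
end

section
/- Under the hypotheses of the previous block-matrix setting (W ⪰ 0, diag(W^{uu}) = u, and the listed entrywise inequality constraints), one has diag(W^{xu}) = x. -/
open Matrix

theorem blockW_diag_xu {n : ℕ}
    (x u : Fin n → ℝ) (Wxx Wxu Wuu : Matrix (Fin n) (Fin n) ℝ)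
    (W : Matrix (Unit ⊕ (Fin n ⊕ Fin n)) (Unit ⊕ (Fin n ⊕ Fin n)) ℝ)
    (hW : W = Matrix.fromBlocks
      (Matrix.of fun (_ _ : Unit) => (1 : ℝ))
      (Matrix.of fun (_ : Unit) j => Sum.elim x u j)
      (Matrix.of fun i (_ : Unit) => Sum.elim x u i)
      (Matrix.fromBlocks Wxx Wxu Wxuᵀ Wuu))
    (hWpsd : W.PosSemidef)
    (hdiagUU : ∀ i, Wuu i i = u i)
    (hWxx : ∀ i j, 0 ≤ Wxx i j)
    (h1 : ∀ i j, 0 ≤ x i - Wxu i j)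
    (h2 : ∀ i j, 0 ≤ -Wxx i j + Wxu i j)
    (h3 : ∀ i j, 0 ≤ Wxx i j - Wxu i j - Wxu j i + Wuu i j)
    (h4 : ∀ i j, 0 ≤ 1 - u j - u i + Wuu i j)
    (h5 : ∀ i j, 0 ≤ -x j + Wxu j i + u j - Wuu i j) :
    ∀ i, Wxu i i = x i := by
  intro i
  have a := h1 i i
  have b := h5 i i
  rw [hdiagUU i] at b
  linarith
end

section
/- If Y ∈ S^{3n+1} is doubly nonnegative with block form [[1, xᵀ, uᵀ, vᵀ],[x, Y^{xx}, Y^{xu}, Y^{xv}],[u, ·, Y^{uu}, Y^{uv}],[v, ·, ·, Y^{vv}]], u + v = e, diag(Y^{uu}) = u, eᵀ diag(Y^{xv}) = 0, and diag(Y^{uu}) + 2 diag(Y^{uv}) + diag(Y^{vv}) = e, then diag(Y^{xv}) = 0 and diag(Y^{vv}) = v and diag(Y^{uv}) = 0. -/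
open Matrix

theorem blockY_diag_relations {n : ℕ}
    (x u v : Fin n → ℝ)
    (Yxx Yxu Yxv Yuu Yuv Yvv : Matrix (Fin n) (Fin n) ℝ)
    (Y : Matrix (Unit ⊕ (Fin n ⊕ (Fin n ⊕ Fin n)))
      (Unit ⊕ (Fin n ⊕ (Fin n ⊕ Fin n))) ℝ)
    (hY : Y = Matrix.of fun i j =>
      match i, j with
      | Sum.inl _, Sum.inl _ => (1 : ℝ)
      | Sum.inl _, Sum.inr (Sum.inl b) => x b
      | Sum.inl _, Sum.inr (Sum.inr (Sum.inl b)) => u b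
      | Sum.inl _, Sum.inr (Sum.inr (Sum.inr b)) => v b
      | Sum.inr (Sum.inl a), Sum.inl _ => x a
      | Sum.inr (Sum.inl a), Sum.inr (Sum.inl b) => Yxx a b
      | Sum.inr (Sum.inl a), Sum.inr (Sum.inr (Sum.inl b)) => Yxu a b
      | Sum.inr (Sum.inl a), Sum.inr (Sum.inr (Sum.inr b)) => Yxv a b
      | Sum.inr (Sum.inr (Sum.inl a)), Sum.inl _ => u a
      | Sum.inr (Sum.inr (Sum.inl a)), Sum.inr (Sum.inl b) => Yxu b a
      | Sum.inr (Sum.inr (Sum.inl a)), Sum.inr (Sum.inr (Sum.inl b)) => Yuu a b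
      | Sum.inr (Sum.inr (Sum.inl a)), Sum.inr (Sum.inr (Sum.inr b)) => Yuv a b
      | Sum.inr (Sum.inr (Sum.inr a)), Sum.inl _ => v a
      | Sum.inr (Sum.inr (Sum.inr a)), Sum.inr (Sum.inl b) => Yxv b a
      | Sum.inr (Sum.inr (Sum.inr a)), Sum.inr (Sum.inr (Sum.inl b)) => Yuv b a
      | Sum.inr (Sum.inr (Sum.inr a)), Sum.inr (Sum.inr (Sum.inr b)) => Yvv a b)
    (hYpsd : Y.PosSemidef) (hY0 : ∀ i j, 0 ≤ Y i j)
    (huv : ∀ i, u i + v i = 1)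
    (hdiagUU : ∀ i, Yuu i i = u i)
    (hsumXV : ∑ i, Yxv i i = 0)
    (hdiagSum : ∀ i, Yuu i i + 2 * Yuv i i + Yvv i i = 1) :
    (∀ i, Yxv i i = 0) ∧ (∀ i, Yvv i i = v i) ∧ (∀ i, Yuv i i = 0) := by
  classical
  have hxvpos : ∀ i, 0 ≤ Yxv i i := by
    intro i
    have := hY0 (Sum.inr (Sum.inl i)) (Sum.inr (Sum.inr (Sum.inr i)))
    rw [hY] at this
    simpa using this
  have part1 : ∀ i, Yxv i i = 0 := fun i =>
    (Finset.sum_eq_zero_iff_of_nonneg (fun j _ => hxvpos j)).mp hsumXV i (Finset.mem_univ i)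
  have key : ∀ (i : Fin n) (t : ℝ),
      0 ≤ 1 - 2 * u i + Yuu i i + 2*t*(v i - Yuv i i) + t^2 * Yvv i i := by
    intro i t
    set w : (Unit ⊕ (Fin n ⊕ (Fin n ⊕ Fin n))) → ℝ :=
      fun j => match j with
        | Sum.inl _ => 1
        | Sum.inr (Sum.inl _) => 0
        | Sum.inr (Sum.inr (Sum.inl b)) => if b = i then -1 else 0
        | Sum.inr (Sum.inr (Sum.inr b)) => if b = i then t else 0 with hw
    have h := hYpsd.dotProduct_mulVec_nonneg w
    rw [hY] at h
    simp only [star_trivial, dotProduct, mulVec, Fintype.sum_sum_type, hw, Matrix.of_apply,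
      mul_ite, ite_mul, mul_zero, zero_mul, mul_one, one_mul, mul_neg, neg_mul, neg_neg,
      Finset.sum_ite_eq', Finset.mem_univ, if_true, Finset.sum_const_zero,
      add_zero, zero_add, Finset.univ_unique, Finset.sum_singleton] at h
    nlinarith [h]
  have part3 : ∀ i, Yuv i i = 0 := by
    intro i
    have ha : 0 ≤ Yuv i i := by
      have := hY0 (Sum.inr (Sum.inr (Sum.inl i))) (Sum.inr (Sum.inr (Sum.inr i)))
      rw [hY] at this
      simpa using this
    have hc : 0 ≤ Yvv i i := by
      have := hY0 (Sum.inr (Sum.inr (Sum.inr i))) (Sum.inr (Sum.inr (Sum.inr i)))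
      rw [hY] at this
      simpa using this
    have hkey2 : ∀ s : ℝ, 0 ≤ Yvv i i * s^2 - 2 * Yuv i i * s := by
      intro s
      have h := key i (-1 - s)
      have heq : 1 - 2 * u i + Yuu i i + 2*(-1-s)*(v i - Yuv i i) + (-1-s)^2 * Yvv i i
          = Yvv i i * s^2 - 2 * Yuv i i * s := by
        linear_combination (-2*s) * hdiagUU i + (-2-2*s) * huv i + (1+2*s) * hdiagSum i
      linarith [heq ▸ h]
    set a := Yuv i i with haa
    set c := Yvv i i with hcc
    have hc1 : (0:ℝ) < c + 1 := by linarith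
    have h := hkey2 (a / (c + 1))
    have h2 : 0 ≤ (c * (a/(c+1))^2 - 2*a*(a/(c+1))) * (c+1)^2 := by
      have : c * (a/(c+1))^2 - 2 * a * (a/(c+1)) = c * (a/(c+1))^2 - 2*a*(a/(c+1)) := rfl
      exact mul_nonneg (by linarith [h]) (sq_nonneg _)
    have h3 : (c * (a/(c+1))^2 - 2*a*(a/(c+1))) * (c+1)^2 = c*a^2 - 2*a^2*(c+1) := by
      field_simp
    rw [h3] at h2
    have hsq : a^2 = 0 := le_antisymm (by nlinarith) (sq_nonneg a)
    exact pow_eq_zero_iff two_ne_zero |>.mp hsq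
  refine ⟨part1, fun i => ?_, part3⟩
  have := hdiagSum i
  have h1 := hdiagUU i
  have h2 := huv i
  have h3 := part3 i
  linarith
end
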